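/- For small τ > 0, let q♭_τ : [0,τ] → M_ν(ℂ) be the solution of q̈ = E(s)q̇ + F(s)q with q♭_τ(0) = 0 and q♭_τ(τ) = 𝟙, and set p♭_τ := (1/2)A⁻¹ q̇♭_τ + B q♭_τ. Then the matrix p♭_τ(τ) is symmetric, i.e. p♭_τ(τ) = ᵗp♭_τ(τ). -/

import Mathlib

open Matrix Set MeasureTheory Filter

attribute [local instance] Matrix.linftyOpNormedAddCommGroup Matrix.linftyOpNormedRing
  Matrix.linftyOpNormedAlgebra

noncomputable section

abbrev Mat (ν : ℕ) := Matrix (Fin ν) (Fin ν) ℂ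

/-- `E(t) := Ȧ(t)A(t)⁻¹ + 2A(t)(ᵗB(t) − B(t))`. -/
def Ecoef {ν : ℕ} (A B : ℂ → Mat ν) (t : ℂ) : Mat ν :=
  deriv A t * (A t)⁻¹ + (2 : ℂ) • (A t * ((B t)ᵀ - B t))

/-- `F(t) := 4A(t)C(t) − 2A(t)Ḃ(t)`. -/
def Fcoef {ν : ℕ} (A B C : ℂ → Mat ν) (t : ℂ) : Mat ν :=
  (4 : ℂ) • (A t * C t) - (2 : ℂ) • (A t * deriv B t)

/-- `q : [0,τ] → Mat ν` is a C² solution of the matrix Euler–Lagrange equation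
`q̈(s) = E(s)·q̇(s) + F(s)·q(s)` with boundary values `q 0 = a`, `q τ = b`. -/
def SolReal {ν : ℕ} (A B C : ℂ → Mat ν) (τ : ℝ) (a b : Mat ν) (q : ℝ → Mat ν) : Prop :=
  ContDiffOn ℝ 2 q (Icc 0 τ) ∧
  (∀ s ∈ Icc (0 : ℝ) τ,
      derivWithin (derivWithin q (Icc 0 τ)) (Icc 0 τ) s =
        Ecoef A B (s : ℂ) * derivWithin q (Icc 0 τ) s
          + Fcoef A B C (s : ℂ) * q s) ∧
  q 0 = a ∧ q τ = b

/-! With `p := ½ A⁻¹ q̇ + B q`, the equation `q̈ = E q̇ + F q` is equivalent to the first-order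
system `ṗ = ᵗB q̇ + 2 C q`. Because `A⁻¹` and `C` are symmetric, the Lagrange bracket
`ᵗq p - ᵗp q` then has zero derivative, so it is constant on `[0, τ]`. It vanishes at `0`
since `q 0 = 0`, and at `τ`, where `q τ = 𝟙`, it equals `p τ - ᵗ(p τ)`. Smallness of `τ` only keeps
`[0, τ]` inside the disc around `0` where `A`, `B` are analytic and `A` is invertible. -/

theorem HasDerivAt.comp_ofReal' {E : Type*} [NormedAddCommGroup E] [NormedSpace ℂ E]
    {f : ℂ → E} {f' : E} {z : ℝ} (hf : HasDerivAt f f' z) :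
    HasDerivAt (fun y : ℝ => f y) f' z := by
  simpa [Function.comp_def] using
    (hf.hasFDerivAt.restrictScalars ℝ).comp_hasDerivAt z Complex.ofRealCLM.hasDerivAt

theorem HasDerivAt.ringInverse {𝕜 R : Type*} [NontriviallyNormedField 𝕜] [NormedRing R]
    [NormedAlgebra 𝕜 R] [HasSummableGeomSeries R] {a : 𝕜 → R} {a' : R} {s : 𝕜}
    (ha : HasDerivAt a a' s) (hu : IsUnit (a s)) :
    HasDerivAt (fun t => Ring.inverse (a t))
      (-(Ring.inverse (a s) * a' * Ring.inverse (a s))) s := by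
  obtain ⟨u, hu⟩ := hu
  have hinv := hasFDerivAt_ringInverse (𝕜 := 𝕜) u
  rw [hu] at hinv
  simpa [← hu, Function.comp_def] using hinv.comp_hasDerivAt s ha

theorem HasDerivAt.matrix_inv {n : Type*} [Fintype n] [DecidableEq n] {𝕜 : Type*}
    [NontriviallyNormedField 𝕜] [NormedAlgebra 𝕜 ℂ] {a : 𝕜 → Matrix n n ℂ} {a' : Matrix n n ℂ}
    {s : 𝕜} (ha : HasDerivAt a a' s) (hu : IsUnit (a s)) :
    HasDerivAt (fun t => (a t)⁻¹) (-((a s)⁻¹ * a' * (a s)⁻¹)) s := by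
  have h := ha.ringInverse hu
  simp only [← Matrix.nonsing_inv_eq_ringInverse] at h
  exact h

theorem HasDerivWithinAt.matrix_transpose {n : Type*} [Fintype n] [DecidableEq n] {𝕜 α : Type*}
    [NontriviallyNormedField 𝕜] [CompleteSpace 𝕜] [NormedRing α] [NormedAlgebra 𝕜 α]
    [FiniteDimensional 𝕜 α] {f : 𝕜 → Matrix n n α} {f' : Matrix n n α} {I : Set 𝕜} {s : 𝕜}
    (hf : HasDerivWithinAt f f' I s) :
    HasDerivWithinAt (fun t => (f t)ᵀ) f'ᵀ I s :=
  (transposeLinearEquiv n n 𝕜 α).toLinearMap.toContinuousLinearMap.hasFDerivAt.comp_hasDerivWithinAt s hf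

def lagrangeBracket {n R : Type*} [Fintype n] [CommRing R] (q p : Matrix n n R) : Matrix n n R :=
  qᵀ * p - pᵀ * q

theorem HasDerivWithinAt.lagrangeBracket {n : Type*} [Fintype n] [DecidableEq n]
    {q p : ℝ → Matrix n n ℂ} {q' p' : Matrix n n ℂ} {I : Set ℝ} {s : ℝ}
    (hq : HasDerivWithinAt q q' I s) (hp : HasDerivWithinAt p p' I s) :
    HasDerivWithinAt (fun t => lagrangeBracket (q t) (p t))
      (q'ᵀ * p s + (q s)ᵀ * p' - (p'ᵀ * q s + (p s)ᵀ * q')) I s :=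
  (hq.matrix_transpose.mul hp).sub (hp.matrix_transpose.mul hq)

theorem lagrangeBracket_one {n R : Type*} [Fintype n] [DecidableEq n] [CommRing R]
    (p : Matrix n n R) : lagrangeBracket 1 p = 0 ↔ p.IsSymm := by
  rw [lagrangeBracket, Matrix.transpose_one, one_mul, mul_one, sub_eq_zero, eq_comm]
  rfl

section Momentum

variable {ν : ℕ} {A B C : ℂ → Mat ν}

def momentum (A B : ℂ → Mat ν) (q q' : ℝ → Mat ν) (s : ℝ) : Mat ν :=
  (2 : ℂ)⁻¹ • ((A s)⁻¹ * q' s) + B s * q s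

-- The left side is what the product rule gives for the derivative of `momentum`, with
-- `(A⁻¹)' = -A⁻¹ Ȧ A⁻¹` and `q̈ = E q̇ + F q` substituted.
theorem momentum_deriv_eq (M M' B B' C q q' : Mat ν) (hM : IsUnit M) :
    (2 : ℂ)⁻¹ • (-(M⁻¹ * M' * M⁻¹) * q'
        + M⁻¹ * ((M' * M⁻¹ + (2 : ℂ) • (M * (Bᵀ - B))) * q'
          + ((4 : ℂ) • (M * C) - (2 : ℂ) • (M * B')) * q))
      + (B' * q + B * q') = Bᵀ * q' + (2 : ℂ) • (C * q) := by
  have hcancel : ∀ X : Mat ν, M⁻¹ * (M * X) = X := fun X =>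
    M.nonsing_inv_mul_cancel_left X ((M.isUnit_iff_isUnit_det).mp hM)
  simp only [neg_mul, mul_add, mul_sub, add_mul, sub_mul, smul_mul_assoc, mul_smul_comm,
    mul_assoc, hcancel, smul_add, smul_sub, smul_neg, smul_smul]
  module

theorem hasDerivWithinAt_momentum {q q' : ℝ → Mat ν} {I : Set ℝ} {s : ℝ}
    (hA : DifferentiableAt ℂ A s) (hB : DifferentiableAt ℂ B s) (hAs : IsUnit (A s))
    (hq : HasDerivWithinAt q (q' s) I s)
    (hq' : HasDerivWithinAt q' (Ecoef A B s * q' s + Fcoef A B C s * q s) I s) :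
    HasDerivWithinAt (momentum A B q q') ((B s)ᵀ * q' s + (2 : ℂ) • (C s * q s)) I s := by
  have hAinv : HasDerivAt (fun t : ℝ => (A t)⁻¹) (-((A s)⁻¹ * deriv A s * (A s)⁻¹)) s :=
    hA.hasDerivAt.comp_ofReal'.matrix_inv hAs
  refine (((hAinv.hasDerivWithinAt.mul hq').const_smul (2 : ℂ)⁻¹).add
    (hB.hasDerivAt.comp_ofReal'.hasDerivWithinAt.mul hq)).congr_deriv ?_
  exact momentum_deriv_eq _ _ _ _ _ _ _ hAs

theorem lagrangeBracket_momentum_deriv_eq_zero (M B C : Mat ν) (hM : M.IsSymm) (hC : C.IsSymm)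
    (q q' : Mat ν) :
    let p := (2 : ℂ)⁻¹ • (M * q') + B * q
    let p' := Bᵀ * q' + (2 : ℂ) • (C * q)
    q'ᵀ * p + qᵀ * p' - (p'ᵀ * q + pᵀ * q') = 0 := by
  simp only [Matrix.transpose_add, Matrix.transpose_mul, Matrix.transpose_smul,
    Matrix.transpose_transpose, hM.eq, hC.eq, mul_add, add_mul, mul_smul_comm, smul_mul_assoc,
    mul_assoc]
  module

variable {τ : ℝ} {a b : Mat ν} {q : ℝ → Mat ν}

theorem SolReal.hasDerivWithinAt (hq : SolReal A B C τ a b q) {s : ℝ}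
    (hs : s ∈ Icc 0 τ) : HasDerivWithinAt q (derivWithin q (Icc 0 τ) s) (Icc 0 τ) s :=
  (hq.1.differentiableOn two_ne_zero s hs).hasDerivWithinAt

theorem SolReal.hasDerivWithinAt_derivWithin (hτ : 0 < τ) (hq : SolReal A B C τ a b q) {s : ℝ}
    (hs : s ∈ Icc 0 τ) :
    HasDerivWithinAt (derivWithin q (Icc 0 τ))
      (Ecoef A B s * derivWithin q (Icc 0 τ) s + Fcoef A B C s * q s) (Icc 0 τ) s := by
  rw [← hq.2.1 s hs]
  exact ((hq.1.derivWithin (uniqueDiffOn_Icc hτ) (m := 1) (by norm_num)).differentiableOn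
    one_ne_zero s hs).hasDerivWithinAt

theorem SolReal.lagrangeBracket_momentum_eq_zero (hτ : 0 < τ) (hq : SolReal A B C τ 0 b q)
    (hA : ∀ s ∈ Icc (0 : ℝ) τ, DifferentiableAt ℂ A s)
    (hB : ∀ s ∈ Icc (0 : ℝ) τ, DifferentiableAt ℂ B s)
    (hAunit : ∀ s ∈ Icc (0 : ℝ) τ, IsUnit (A s)) (hAsymm : ∀ s ∈ Icc (0 : ℝ) τ, (A s).IsSymm)
    (hCsymm : ∀ s ∈ Icc (0 : ℝ) τ, (C s).IsSymm) :
    lagrangeBracket (q τ) (momentum A B q (derivWithin q (Icc 0 τ)) τ) = 0 := by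
  set S := fun t => lagrangeBracket (q t) (momentum A B q (derivWithin q (Icc 0 τ)) t)
  have hS : ∀ s ∈ Icc 0 τ, HasDerivWithinAt S 0 (Icc 0 τ) s := fun s hs =>
    ((hq.hasDerivWithinAt hs).lagrangeBracket (hasDerivWithinAt_momentum (hA s hs) (hB s hs)
      (hAunit s hs) (hq.hasDerivWithinAt hs) (hq.hasDerivWithinAt_derivWithin hτ hs))).congr_deriv
      (lagrangeBracket_momentum_deriv_eq_zero _ _ _ (hAsymm s hs).inv (hCsymm s hs) _ _)
  have hconst := constant_of_derivWithin_zero (fun s hs => (hS s hs).differentiableWithinAt)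
    (fun s hs => (hS s (Ico_subset_Icc_self hs)).derivWithin
      (uniqueDiffOn_Icc hτ s (Ico_subset_Icc_self hs))) τ (right_mem_Icc.mpr hτ.le)
  simpa [S, lagrangeBracket, hq.2.2.1] using hconst

end Momentum

theorem statement6_general (ν : ℕ) (A B C : ℂ → Mat ν)
    (U : Set ℂ) (hU : U ∈ nhds (0 : ℂ))
    (hA : AnalyticOnNhd ℂ A U) (hB : AnalyticOnNhd ℂ B U)
    (hAsymm : ∀ t ∈ U, (A t).IsSymm) (hCsymm : ∀ t ∈ U, (C t).IsSymm)
    (A₀ : Matrix (Fin ν) (Fin ν) ℝ) (hA₀ : A₀.PosDef)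
    (hA0 : A 0 = A₀.map (Complex.ofReal : ℝ → ℂ)) :
    ∃ T > (0 : ℝ), ∀ τ : ℝ, 0 < τ → τ < T → ∀ q : ℝ → Mat ν,
      SolReal A B C τ 0 1 q →
      Matrix.IsSymm
        ((2 : ℂ)⁻¹ • ((A (τ : ℂ))⁻¹ * derivWithin q (Icc 0 τ) τ)
          + B (τ : ℂ) * q τ) := by
  have hA0unit : IsUnit (A 0) := hA0 ▸ hA₀.isUnit.map Complex.ofRealHom.mapMatrix
  have hnear : ∀ᶠ t in nhds (0 : ℂ), t ∈ U ∧ IsUnit (A t) :=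
    Filter.Eventually.and hU
      ((hA 0 (mem_of_mem_nhds hU)).continuousAt.eventually (Units.isOpen.mem_nhds hA0unit))
  obtain ⟨ε, hε, hball⟩ := Metric.eventually_nhds_iff.mp hnear
  refine ⟨ε, hε, fun τ hτ hτε q hq => ?_⟩
  have hsmall : ∀ s ∈ Icc (0 : ℝ) τ, (s : ℂ) ∈ U ∧ IsUnit (A s) := fun s hs =>
    hball (by simpa [abs_of_nonneg hs.1] using hs.2.trans_lt hτε)
  have hbracket := hq.lagrangeBracket_momentum_eq_zero hτ
    (fun s hs => (hA _ (hsmall s hs).1).differentiableAt)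
    (fun s hs => (hB _ (hsmall s hs).1).differentiableAt)
    (fun s hs => (hsmall s hs).2) (fun s hs => hAsymm _ (hsmall s hs).1)
    (fun s hs => hCsymm _ (hsmall s hs).1)
  rwa [hq.2.2.2, lagrangeBracket_one] at hbracket

theorem statement6 (ν : ℕ) (hν : 1 ≤ ν) (A B C : ℂ → Mat ν)
    (U : Set ℂ) (hU : U ∈ nhds (0 : ℂ)) (hUopen : IsOpen U)
    (hA : AnalyticOnNhd ℂ A U) (hB : AnalyticOnNhd ℂ B U) (hC : AnalyticOnNhd ℂ C U)
    (hAsymm : ∀ t ∈ U, (A t).IsSymm) (hCsymm : ∀ t ∈ U, (C t).IsSymm)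
    (A₀ : Matrix (Fin ν) (Fin ν) ℝ) (hA₀ : A₀.PosDef)
    (hA0 : A 0 = A₀.map (Complex.ofReal : ℝ → ℂ)) :
    ∃ T > (0 : ℝ), ∀ τ : ℝ, 0 < τ → τ < T → ∀ q : ℝ → Mat ν,
      SolReal A B C τ 0 1 q →
      Matrix.IsSymm
        ((2 : ℂ)⁻¹ • ((A (τ : ℂ))⁻¹ * derivWithin q (Icc 0 τ) τ)
          + B (τ : ℂ) * q τ) :=
  statement6_general ν A B C U hU hA hB hAsymm hCsymm A₀ hA₀ hA0
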